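/- For the 6th-order central weights (1/60,-8/60,37/60,37/60,-8/60,1/60), the modified wavenumber satisfies Φ(φ) = φ + O(φ⁷) as φ → 0. -/

import Mathlib

/-!
Multiplying out, `Φ(φ) = -I Σₗ wₗ (e^{I mₗ φ} - e^{I (mₗ - 1) φ})` with `mₗ = l - 2`. Replacing each
exponential by its Taylor polynomial of degree `< n` costs `O(φⁿ)`, and the polynomial part equals `φ`
exactly when the weights satisfy the order conditions `Σₗ wₗ (mₗʲ - (mₗ - 1)ʲ) = [j = 1]` for `j < n`.
The sixth-order central weights satisfy them for `n = 7`.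
-/

open Complex Asymptotics Filter Finset Topology

noncomputable def modifiedWavenumber {ι : Type*} [Fintype ι] (w m : ι → ℂ) (φ : ℝ) : ℂ :=
  -I * (∑ l, w l * exp (I * m l * φ)) * (1 - exp (-I * φ))

lemma exp_mul_sub_sum_range_isBigO_pow (c : ℂ) (n : ℕ) :
    (fun φ : ℝ => exp (c * φ) - ∑ i ∈ range n, (c * φ) ^ i / i.factorial) =O[𝓝 0] fun φ : ℝ => φ ^ n := by
  have hc : Tendsto (fun φ : ℝ => c * φ) (𝓝 0) (𝓝 0) := by
    simpa using (continuous_ofReal.tendsto 0).const_mul c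
  refine ((exp_sub_sum_range_isBigO_pow n).comp_tendsto hc).trans ?_
  simp only [Function.comp_def, mul_pow]
  refine (isBigO_refl _ _).const_mul_left _ |>.trans (isBigO_of_le _ fun φ => ?_)
  simp

lemma exp_mul_mul_one_sub_exp_neg (a : ℂ) (φ : ℝ) :
    exp (I * a * φ) * (1 - exp (-I * φ)) = exp (I * a * φ) - exp (I * (a - 1) * φ) := by
  rw [mul_one_sub, ← exp_add]
  ring_nf

section Consistency

variable {ι : Type*} [Fintype ι] (w m : ι → ℂ) {n : ℕ}

def OrderConditions (n : ℕ) : Prop :=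
  ∀ j < n, ∑ l, w l * (m l ^ j - (m l - 1) ^ j) = if j = 1 then 1 else 0

lemma neg_I_mul_sum_taylor_eq (hn : 1 < n)
    (horder : OrderConditions w m n) (φ : ℂ) :
    -I * ∑ l, w l * (∑ j ∈ range n, (I * m l * φ) ^ j / j.factorial -
      ∑ j ∈ range n, (I * (m l - 1) * φ) ^ j / j.factorial) = φ := by
  calc -I * ∑ l, w l * (∑ j ∈ range n, (I * m l * φ) ^ j / j.factorial -
          ∑ j ∈ range n, (I * (m l - 1) * φ) ^ j / j.factorial)
      = -I * ∑ j ∈ range n, (I * φ) ^ j / j.factorial * ∑ l, w l * (m l ^ j - (m l - 1) ^ j) := by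
        simp only [← sum_sub_distrib, mul_sum]
        rw [sum_comm]
        exact sum_congr rfl fun j _ => sum_congr rfl fun l _ => by simp only [mul_pow]; ring
    _ = -I * ∑ j ∈ range n, (I * φ) ^ j / j.factorial * if j = 1 then 1 else 0 := by
        congr 1; exact sum_congr rfl fun j hj => by rw [horder j (mem_range.1 hj)]
    _ = φ := by
        simp only [mul_ite, mul_one, mul_zero, sum_ite_eq', mem_range.2 hn, if_true, pow_one,
          Nat.factorial_one, Nat.cast_one, div_one]
        linear_combination -φ * I_sq

theorem modifiedWavenumber_sub_isBigO (hn : 1 < n)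
    (horder : OrderConditions w m n) :
    (fun φ => modifiedWavenumber w m φ - φ) =O[𝓝 0] fun φ : ℝ => φ ^ n := by
  set R : ℂ → ℂ := fun z => exp z - ∑ j ∈ range n, z ^ j / j.factorial
  have hsplit : ∀ φ : ℝ, modifiedWavenumber w m φ - φ =
      -I * ∑ l, w l * (R (I * m l * φ) - R (I * (m l - 1) * φ)) := by
    intro φ
    have htaylor := neg_I_mul_sum_taylor_eq w m hn horder φ
    rw [modifiedWavenumber, mul_assoc, sum_mul]
    simp_rw [mul_assoc (w _), exp_mul_mul_one_sub_exp_neg]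
    simp only [R, mul_sub, sum_sub_distrib] at htaylor ⊢
    linear_combination htaylor
  simp only [hsplit]
  refine .const_mul_left (.fun_sum fun l _ => .const_mul_left (.sub ?_ ?_) _) _ <;>
    exact exp_mul_sub_sum_range_isBigO_pow _ n

end Consistency

theorem stmt_12 :
    let w : Fin 6 → ℝ := ![1/60, -8/60, 37/60, 37/60, -8/60, 1/60]
    let Φ : ℝ → ℂ := fun φ =>
      -Complex.I * (∑ l : Fin 6, (w l : ℂ) *
          Complex.exp (Complex.I * (((l : ℕ) : ℂ) + 1 - 3) * (φ : ℂ))) *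
        (1 - Complex.exp (-Complex.I * (φ : ℂ)))
    (fun φ : ℝ => Φ φ - (φ : ℂ)) =O[nhds (0 : ℝ)] fun φ : ℝ => φ ^ 7 := by
  intro w Φ
  refine modifiedWavenumber_sub_isBigO (fun l => (w l : ℂ)) (fun l => ((l : ℕ) : ℂ) + 1 - 3)
    (by norm_num) fun j hj => ?_
  interval_cases j <;> simp [w, Fin.sum_univ_six] <;> norm_num
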